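/- Let J be the symmetric 5×5 Jacobian of the cycle-support network with M = 5, J_{ik} = Σ_{j=1}^{5} β_j φ_{ij} φ_{kj} − γ·δ_{ik}. Assume 0 < β0 < γ (so R0 = β0/γ < 1) and γ/β0 < ζ < 1 + 5(1−R0)/R0. If φ0 ∈ (0, 1/4] and |φ0 − 1/5| < φ̃5, then every eigenvalue of J is negative; if φ0 ∈ (0, 1/4] and |φ0 − 1/5| > φ̃5, then J has a positive eigenvalue. -/
import Mathlib

set_option maxRecDepth 10000


open Matrix

/-- Flux matrix of the cycle-support network with `M = 5`. -/
noncomputable def csFlux5 (φ0 : ℝ) : Matrix (Fin 5) (Fin 5) ℝ :=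
  !![1 - 2*φ0, φ0, 0, 0, φ0;
     φ0, 1 - 3*φ0, φ0, 0, φ0;
     0, φ0, 1 - 3*φ0, φ0, φ0;
     0, 0, φ0, 1 - 2*φ0, φ0;
     φ0, φ0, φ0, φ0, 1 - 4*φ0]

/-- Infection rates: `β₁ = … = β₄ = β0`, `β₅ = ζ·β0`. -/
noncomputable def csBeta5 (β0 ζ : ℝ) : Fin 5 → ℝ := ![β0, β0, β0, β0, ζ * β0]

/-- Jacobian of the infected subsystem at the disease-free equilibrium:
`J_{ik} = Σ_j β_j φ_{ij} φ_{kj} − γ·δ_{ik}`. -/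
noncomputable def csJac5 (β0 ζ γ φ0 : ℝ) : Matrix (Fin 5) (Fin 5) ℝ :=
  Matrix.of fun i k =>
    (∑ j, csBeta5 β0 ζ j * csFlux5 φ0 i j * csFlux5 φ0 k j)
      - γ * (if i = k then 1 else 0)

set_option maxHeartbeats 1000000 in
/-- Core negative-definiteness argument in the diagonalizing coordinates. -/
private lemma csAuxZero (β0 ζ γ φ0 μ al be c1 c2 c3 : ℝ)
    (hβ0 : 0 < β0) (hβγ : β0 < γ) (hφlo : 0 < φ0) (hφhi : φ0 ≤ 1/4)
    (hK11 : β0*(4+ζ) < 5*γ)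
    (hdetK : 0 < γ*(5*γ-4*β0-β0*ζ) - β0*(γ*(1+4*ζ)-5*β0*ζ)*(1-5*φ0)^2)
    (hμ : 0 ≤ μ)
    (key : μ * (5*al^2 + 20*be^2 + 4*c1^2 + 2*c2^2 + 2*c3^2) =
        (5*(β0*(4+ζ)/5 - γ)*al^2 - 8*(1-5*φ0)*(ζ-1)*β0*al*be
          + 20*(β0*(1-5*φ0)^2*(1+4*ζ)/5 - γ)*be^2)
      + (β0*(4*(1-3*φ0)^2*c1^2 + 2*((1-2*φ0)*c2+φ0*c3)^2 + 2*(φ0*c2+(1-4*φ0)*c3)^2)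
          - γ*(4*c1^2+2*c2^2+2*c3^2))) :
    al = 0 ∧ be = 0 ∧ c1 = 0 ∧ c2 = 0 ∧ c3 = 0 := by
  have hb : β0*(4+ζ)/5 - γ < 0 := by linarith
  have h47 : (0:ℝ) ≤ 4 - 12*φ0 + 7*φ0^2 := by nlinarith [sq_nonneg φ0]
  have hbr : 0 ≤ c2^2*(4-5*φ0) + c3^2*(8-17*φ0) - 2*c2*c3*(2-6*φ0) := by
    nlinarith [sq_nonneg ((4-5*φ0)*c2 - (2-6*φ0)*c3), mul_nonneg h47 (sq_nonneg c3),
      (by linarith : (0:ℝ) < 4 - 5*φ0)]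
  have hform : 4*(1-3*φ0)^2*c1^2 + 2*((1-2*φ0)*c2+φ0*c3)^2 + 2*(φ0*c2+(1-4*φ0)*c3)^2
      ≤ 4*c1^2 + 2*c2^2 + 2*c3^2 := by
    nlinarith [mul_nonneg (mul_nonneg hφlo.le (by linarith : (0:ℝ) ≤ 2 - 3*φ0)) (sq_nonneg c1),
      mul_nonneg hφlo.le hbr]
  have hT : β0*(4*(1-3*φ0)^2*c1^2 + 2*((1-2*φ0)*c2+φ0*c3)^2 + 2*(φ0*c2+(1-4*φ0)*c3)^2)
      - γ*(4*c1^2+2*c2^2+2*c3^2) ≤ (β0-γ)*(4*c1^2+2*c2^2+2*c3^2) := by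
    nlinarith [mul_le_mul_of_nonneg_left hform hβ0.le]
  have hS : 5*(β0*(4+ζ)/5 - γ)*al^2 - 8*(1-5*φ0)*(ζ-1)*β0*al*be
      + 20*(β0*(1-5*φ0)^2*(1+4*ζ)/5 - γ)*be^2 ≤ 0 := by
    nlinarith [sq_nonneg (5*(β0*(4+ζ)/5-γ)*al - 4*(1-5*φ0)*(ζ-1)*β0*be),
      mul_nonneg hdetK.le (sq_nonneg be), hb]
  have hμN : 0 ≤ μ * (5*al^2 + 20*be^2 + 4*c1^2 + 2*c2^2 + 2*c3^2) :=
    mul_nonneg hμ (by positivity)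
  have h2 : 0 ≤ (β0-γ)*(4*c1^2+2*c2^2+2*c3^2) := by linarith [hμN, key, hS, hT]
  have hnorm : 4*c1^2+2*c2^2+2*c3^2 ≤ 0 := by
    nlinarith [h2, sq_nonneg c1, sq_nonneg c2, sq_nonneg c3]
  have hc1 : c1 = 0 := by
    have h1 : c1^2 = 0 := le_antisymm (by linarith [sq_nonneg c2, sq_nonneg c3]) (sq_nonneg c1)
    exact sq_eq_zero_iff.mp h1
  have hc2 : c2 = 0 := by
    have h1 : c2^2 = 0 := le_antisymm (by linarith [sq_nonneg c1, sq_nonneg c3]) (sq_nonneg c2)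
    exact sq_eq_zero_iff.mp h1
  have hc3 : c3 = 0 := by
    have h1 : c3^2 = 0 := le_antisymm (by linarith [sq_nonneg c1, sq_nonneg c2]) (sq_nonneg c3)
    exact sq_eq_zero_iff.mp h1
  subst hc1; subst hc2; subst hc3
  have hN2 : 0 ≤ μ * (5*al^2 + 20*be^2) := mul_nonneg hμ (by positivity)
  have hS0 : 5*(β0*(4+ζ)/5 - γ)*al^2 - 8*(1-5*φ0)*(ζ-1)*β0*al*be
      + 20*(β0*(1-5*φ0)^2*(1+4*ζ)/5 - γ)*be^2 = 0 := by
    have hge : 0 ≤ 5*(β0*(4+ζ)/5 - γ)*al^2 - 8*(1-5*φ0)*(ζ-1)*β0*al*be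
        + 20*(β0*(1-5*φ0)^2*(1+4*ζ)/5 - γ)*be^2 := by linarith [hN2, key]
    linarith [hS, hge]
  have hKS : (β0*(4+ζ)/5 - γ) * (5*(β0*(4+ζ)/5 - γ)*al^2 - 8*(1-5*φ0)*(ζ-1)*β0*al*be
      + 20*(β0*(1-5*φ0)^2*(1+4*ζ)/5 - γ)*be^2) = 0 := by rw [hS0]; ring
  have hbe : be = 0 := by
    have h1 : be^2 = 0 := by
      refine le_antisymm ?_ (sq_nonneg be)
      nlinarith [hKS, sq_nonneg (5*(β0*(4+ζ)/5-γ)*al - 4*(1-5*φ0)*(ζ-1)*β0*be), hdetK]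
    exact sq_eq_zero_iff.mp h1
  subst hbe
  have hal : al = 0 := by
    have h1 : al^2 = 0 := by
      refine le_antisymm ?_ (sq_nonneg al)
      nlinarith [hS0, hb]
    exact sq_eq_zero_iff.mp h1
  exact ⟨hal, rfl, rfl, rfl, rfl⟩

set_option maxHeartbeats 2000000 in
/-- If `x` is an eigenvector of `csJac5` with nonnegative eigenvalue under the
stability condition, then `x = 0`. -/
private lemma csMain1 (β0 ζ γ φ0 μ : ℝ) (x : Fin 5 → ℝ)
    (hβ0 : 0 < β0) (hβγ : β0 < γ) (hφlo : 0 < φ0) (hφhi : φ0 ≤ 1/4)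
    (hK11 : β0*(4+ζ) < 5*γ)
    (hdetK : 0 < γ*(5*γ-4*β0-β0*ζ) - β0*(γ*(1+4*ζ)-5*β0*ζ)*(1-5*φ0)^2)
    (hμ : 0 ≤ μ)
    (h : (csJac5 β0 ζ γ φ0).mulVec x = μ • x) : x = 0 := by
  have m0 : β0*((1-2*φ0)*x 0 + φ0*x 1 + φ0*x 4)*(1-2*φ0)
        + β0*(φ0*x 0 + (1-3*φ0)*x 1 + φ0*x 2 + φ0*x 4)*φ0
        + ζ*β0*(φ0*x 0 + φ0*x 1 + φ0*x 2 + φ0*x 3 + (1-4*φ0)*x 4)*φ0 - γ*x 0 = μ * x 0 := by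
    have e := congrFun h (0 : Fin 5)
    simp only [Pi.smul_apply, smul_eq_mul] at e
    rw [← e]
    simp [csJac5, csFlux5, csBeta5, Matrix.mulVec, dotProduct, Fin.sum_univ_five,
      Matrix.cons_val_zero, Matrix.cons_val_one, Matrix.head_cons, Matrix.cons_val_two,
      Matrix.cons_val_three, Matrix.cons_val_four, Matrix.vecTail, Matrix.vecHead]
    ring
  have m1 : β0*((1-2*φ0)*x 0 + φ0*x 1 + φ0*x 4)*φ0
        + β0*(φ0*x 0 + (1-3*φ0)*x 1 + φ0*x 2 + φ0*x 4)*(1-3*φ0)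
        + β0*(φ0*x 1 + (1-3*φ0)*x 2 + φ0*x 3 + φ0*x 4)*φ0
        + ζ*β0*(φ0*x 0 + φ0*x 1 + φ0*x 2 + φ0*x 3 + (1-4*φ0)*x 4)*φ0 - γ*x 1 = μ * x 1 := by
    have e := congrFun h (1 : Fin 5)
    simp only [Pi.smul_apply, smul_eq_mul] at e
    rw [← e]
    simp [csJac5, csFlux5, csBeta5, Matrix.mulVec, dotProduct, Fin.sum_univ_five,
      Matrix.cons_val_zero, Matrix.cons_val_one, Matrix.head_cons, Matrix.cons_val_two,
      Matrix.cons_val_three, Matrix.cons_val_four, Matrix.vecTail, Matrix.vecHead]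
    ring
  have m2 : β0*(φ0*x 0 + (1-3*φ0)*x 1 + φ0*x 2 + φ0*x 4)*φ0
        + β0*(φ0*x 1 + (1-3*φ0)*x 2 + φ0*x 3 + φ0*x 4)*(1-3*φ0)
        + β0*(φ0*x 2 + (1-2*φ0)*x 3 + φ0*x 4)*φ0
        + ζ*β0*(φ0*x 0 + φ0*x 1 + φ0*x 2 + φ0*x 3 + (1-4*φ0)*x 4)*φ0 - γ*x 2 = μ * x 2 := by
    have e := congrFun h (2 : Fin 5)
    simp only [Pi.smul_apply, smul_eq_mul] at e
    rw [← e]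
    simp [csJac5, csFlux5, csBeta5, Matrix.mulVec, dotProduct, Fin.sum_univ_five,
      Matrix.cons_val_zero, Matrix.cons_val_one, Matrix.head_cons, Matrix.cons_val_two,
      Matrix.cons_val_three, Matrix.cons_val_four, Matrix.vecTail, Matrix.vecHead]
    ring
  have m3 : β0*(φ0*x 1 + (1-3*φ0)*x 2 + φ0*x 3 + φ0*x 4)*φ0
        + β0*(φ0*x 2 + (1-2*φ0)*x 3 + φ0*x 4)*(1-2*φ0)
        + ζ*β0*(φ0*x 0 + φ0*x 1 + φ0*x 2 + φ0*x 3 + (1-4*φ0)*x 4)*φ0 - γ*x 3 = μ * x 3 := by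
    have e := congrFun h (3 : Fin 5)
    simp only [Pi.smul_apply, smul_eq_mul] at e
    rw [← e]
    simp [csJac5, csFlux5, csBeta5, Matrix.mulVec, dotProduct, Fin.sum_univ_five,
      Matrix.cons_val_zero, Matrix.cons_val_one, Matrix.head_cons, Matrix.cons_val_two,
      Matrix.cons_val_three, Matrix.cons_val_four, Matrix.vecTail, Matrix.vecHead]
    ring
  have m4 : β0*((1-2*φ0)*x 0 + φ0*x 1 + φ0*x 4)*φ0
        + β0*(φ0*x 0 + (1-3*φ0)*x 1 + φ0*x 2 + φ0*x 4)*φ0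
        + β0*(φ0*x 1 + (1-3*φ0)*x 2 + φ0*x 3 + φ0*x 4)*φ0
        + β0*(φ0*x 2 + (1-2*φ0)*x 3 + φ0*x 4)*φ0
        + ζ*β0*(φ0*x 0 + φ0*x 1 + φ0*x 2 + φ0*x 3 + (1-4*φ0)*x 4)*(1-4*φ0) - γ*x 4 = μ * x 4 := by
    have e := congrFun h (4 : Fin 5)
    simp only [Pi.smul_apply, smul_eq_mul] at e
    rw [← e]
    simp [csJac5, csFlux5, csBeta5, Matrix.mulVec, dotProduct, Fin.sum_univ_five,
      Matrix.cons_val_zero, Matrix.cons_val_one, Matrix.head_cons, Matrix.cons_val_two,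
      Matrix.cons_val_three, Matrix.cons_val_four, Matrix.vecTail, Matrix.vecHead]
    ring
  have key : μ * (5*((x 0 + x 1 + x 2 + x 3 + x 4)/5)^2
        + 20*((x 0 + x 1 + x 2 + x 3 - 4*x 4)/20)^2
        + 4*((x 0 - x 1 - x 2 + x 3)/4)^2
        + 2*((x 0 - x 3)/2)^2 + 2*((x 1 - x 2)/2)^2) =
      (5*(β0*(4+ζ)/5 - γ)*((x 0 + x 1 + x 2 + x 3 + x 4)/5)^2
        - 8*(1-5*φ0)*(ζ-1)*β0*((x 0 + x 1 + x 2 + x 3 + x 4)/5)*((x 0 + x 1 + x 2 + x 3 - 4*x 4)/20)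
        + 20*(β0*(1-5*φ0)^2*(1+4*ζ)/5 - γ)*((x 0 + x 1 + x 2 + x 3 - 4*x 4)/20)^2)
    + (β0*(4*(1-3*φ0)^2*((x 0 - x 1 - x 2 + x 3)/4)^2
          + 2*((1-2*φ0)*((x 0 - x 3)/2)+φ0*((x 1 - x 2)/2))^2
          + 2*(φ0*((x 0 - x 3)/2)+(1-4*φ0)*((x 1 - x 2)/2))^2)
        - γ*(4*((x 0 - x 1 - x 2 + x 3)/4)^2 + 2*((x 0 - x 3)/2)^2 + 2*((x 1 - x 2)/2)^2)) := by
    linear_combination (-(x 0)) * m0 + (-(x 1)) * m1 + (-(x 2)) * m2 + (-(x 3)) * m3 + (-(x 4)) * m4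
  obtain ⟨hal, hbe, hc1, hc2, hc3⟩ := csAuxZero β0 ζ γ φ0 μ _ _ _ _ _
    hβ0 hβγ hφlo hφhi hK11 hdetK hμ key
  have e0 : x 0 = 0 := by linarith
  have e1 : x 1 = 0 := by linarith
  have e2 : x 2 = 0 := by linarith
  have e3 : x 3 = 0 := by linarith
  have e4 : x 4 = 0 := by linarith
  funext i
  fin_cases i
  · simpa using e0
  · simpa using e1
  · simpa using e2
  · simpa using e3
  · simpa using e4

set_option maxHeartbeats 2000000 in
/-- Explicit eigenvector for a root of the hub-block quadratic. -/
private lemma csEigen (β0 ζ γ φ0 u : ℝ)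
    (hq : u^2 - ((β0*(4+ζ)/5 - γ) + (β0*(1-5*φ0)^2*(1+4*ζ)/5 - γ))*u
        + ((β0*(4+ζ)/5 - γ) * (β0*(1-5*φ0)^2*(1+4*ζ)/5 - γ)
          - 4*(1-5*φ0)^2*(ζ-1)^2*β0^2/25) = 0) :
    (csJac5 β0 ζ γ φ0).mulVec
      ![4*(1-5*φ0)*(ζ-1)*β0/5 + ((β0*(4+ζ)/5 - γ) - u),
        4*(1-5*φ0)*(ζ-1)*β0/5 + ((β0*(4+ζ)/5 - γ) - u),
        4*(1-5*φ0)*(ζ-1)*β0/5 + ((β0*(4+ζ)/5 - γ) - u),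
        4*(1-5*φ0)*(ζ-1)*β0/5 + ((β0*(4+ζ)/5 - γ) - u),
        4*(1-5*φ0)*(ζ-1)*β0/5 - 4*((β0*(4+ζ)/5 - γ) - u)]
    = u • ![4*(1-5*φ0)*(ζ-1)*β0/5 + ((β0*(4+ζ)/5 - γ) - u),
        4*(1-5*φ0)*(ζ-1)*β0/5 + ((β0*(4+ζ)/5 - γ) - u),
        4*(1-5*φ0)*(ζ-1)*β0/5 + ((β0*(4+ζ)/5 - γ) - u),
        4*(1-5*φ0)*(ζ-1)*β0/5 + ((β0*(4+ζ)/5 - γ) - u),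
        4*(1-5*φ0)*(ζ-1)*β0/5 - 4*((β0*(4+ζ)/5 - γ) - u)] := by
  funext i
  fin_cases i <;>
  · simp [csJac5, csFlux5, csBeta5, Matrix.mulVec, dotProduct, Fin.sum_univ_five,
      Matrix.cons_val_zero, Matrix.cons_val_one, Matrix.head_cons, Matrix.cons_val_two,
      Matrix.cons_val_three, Matrix.cons_val_four, Matrix.vecTail, Matrix.vecHead]
    first
      | linear_combination hq
      | linear_combination -hq
      | linear_combination (4:ℝ) * hq
      | linear_combination (-4:ℝ) * hq

set_option maxHeartbeats 1000000 in
theorem cycleSupport5_DFE (β0 γ ζ φ0 : ℝ)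
    (hβ0 : 0 < β0) (hβγ : β0 < γ)
    (hζlo : γ / β0 < ζ)
    (hζhi : ζ < 1 + 5 * (1 - β0 / γ) / (β0 / γ))
    (hφlo : 0 < φ0) (hφhi : φ0 ≤ 1 / 4) :
    (|φ0 - 1 / 5| <
        (1 / 5) * Real.sqrt ((5 * (1 - β0 / γ) - (β0 / γ) * (ζ - 1)) /
          ((β0 / γ) * (5 * ζ * (1 - β0 / γ) - (ζ - 1)))) →
      ∀ μ ∈ spectrum ℝ (csJac5 β0 ζ γ φ0), μ < 0) ∧
    ((1 / 5) * Real.sqrt ((5 * (1 - β0 / γ) - (β0 / γ) * (ζ - 1)) /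
          ((β0 / γ) * (5 * ζ * (1 - β0 / γ) - (ζ - 1)))) < |φ0 - 1 / 5| →
      ∃ μ ∈ spectrum ℝ (csJac5 β0 ζ γ φ0), 0 < μ) := by
  have hγ : 0 < γ := hβ0.trans hβγ
  have hζ1 : 1 < ζ := lt_trans ((one_lt_div hβ0).mpr hβγ) hζlo
  have hζβ : γ < ζ * β0 := (div_lt_iff₀ hβ0).mp hζlo
  have hζhi' : ζ < (5*γ - 4*β0)/β0 := by
    have e : 1 + 5 * (1 - β0 / γ) / (β0 / γ) = (5*γ - 4*β0)/β0 := by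
      field_simp
      ring
    rwa [e] at hζhi
  have hNum : 0 < 5*γ - 4*β0 - β0*ζ := by
    have := (lt_div_iff₀ hβ0).mp hζhi'
    nlinarith
  have hK11 : β0*(4+ζ) < 5*γ := by nlinarith
  have hCnum : 0 < γ*(1+4*ζ) - 5*β0*ζ := by
    rcases le_or_gt (5*β0) (4*γ) with h | h
    · nlinarith [mul_nonneg (by linarith : (0:ℝ) ≤ ζ) (by linarith : (0:ℝ) ≤ 4*γ - 5*β0)]
    · nlinarith [mul_pos hNum (by linarith : (0:ℝ) < 5*β0 - 4*γ), sq_nonneg (γ - β0)]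
  have hBC : 0 < β0*(γ*(1+4*ζ)-5*β0*ζ) := mul_pos hβ0 hCnum
  have hArg : (5 * (1 - β0 / γ) - (β0 / γ) * (ζ - 1)) /
      ((β0 / γ) * (5 * ζ * (1 - β0 / γ) - (ζ - 1)))
      = γ*(5*γ-4*β0-β0*ζ) / (β0*(γ*(1+4*ζ)-5*β0*ζ)) := by
    rw [div_eq_div_iff]
    · field_simp
      ring
    · have e : (β0 / γ) * (5 * ζ * (1 - β0 / γ) - (ζ - 1))
          = β0*(γ*(1+4*ζ)-5*β0*ζ)/γ^2 := by field_simp; ring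
      rw [e]
      exact ne_of_gt (div_pos hBC (by positivity))
    · exact ne_of_gt hBC
  constructor
  · -- all eigenvalues negative
    intro hcond μ hμ
    by_contra hcon
    push_neg at hcon
    rw [hArg] at hcond
    have h5 : 5*|φ0 - 1/5| < Real.sqrt (γ*(5*γ-4*β0-β0*ζ) / (β0*(γ*(1+4*ζ)-5*β0*ζ))) := by
      linarith
    have hsq : (5*|φ0 - 1/5|)^2 < γ*(5*γ-4*β0-β0*ζ) / (β0*(γ*(1+4*ζ)-5*β0*ζ)) :=
      (Real.lt_sqrt (by positivity)).mp h5
    have ht2 : 25*(φ0 - 1/5)^2 < γ*(5*γ-4*β0-β0*ζ) / (β0*(γ*(1+4*ζ)-5*β0*ζ)) := by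
      have e : (5*|φ0 - 1/5|)^2 = 25*(φ0 - 1/5)^2 := by
        rw [mul_pow, sq_abs]; ring
      rw [e] at hsq
      exact hsq
    have hdetK : 0 < γ*(5*γ-4*β0-β0*ζ) - β0*(γ*(1+4*ζ)-5*β0*ζ)*(1-5*φ0)^2 := by
      have h1 := (lt_div_iff₀ hBC).mp ht2
      nlinarith [h1]
    rw [spectrum.mem_iff] at hμ
    have hdet : ((algebraMap ℝ (Matrix (Fin 5) (Fin 5) ℝ)) μ - csJac5 β0 ζ γ φ0).det = 0 := by
      by_contra hd
      exact hμ ((Matrix.isUnit_iff_isUnit_det _).mpr (isUnit_iff_ne_zero.mpr hd))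
    obtain ⟨x, hx0, hx⟩ := (Matrix.exists_mulVec_eq_zero_iff).mpr hdet
    have hJx : (csJac5 β0 ζ γ φ0).mulVec x = μ • x := by
      rw [Algebra.algebraMap_eq_smul_one, Matrix.sub_mulVec, Matrix.smul_mulVec,
        Matrix.one_mulVec] at hx
      exact (sub_eq_zero.mp hx).symm
    exact hx0 (csMain1 β0 ζ γ φ0 μ x hβ0 hβγ hφlo hφhi hK11 hdetK hcon hJx)
  · -- a positive eigenvalue exists
    intro hcond
    rw [hArg] at hcond
    have h5 : Real.sqrt (γ*(5*γ-4*β0-β0*ζ) / (β0*(γ*(1+4*ζ)-5*β0*ζ))) < 5*|φ0 - 1/5| := by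
      linarith
    have hpos5 : 0 < 5*|φ0 - 1/5| := lt_of_le_of_lt (Real.sqrt_nonneg _) h5
    have hsq : γ*(5*γ-4*β0-β0*ζ) / (β0*(γ*(1+4*ζ)-5*β0*ζ)) < (5*|φ0 - 1/5|)^2 :=
      (Real.sqrt_lt' hpos5).mp h5
    have ht2 : γ*(5*γ-4*β0-β0*ζ) / (β0*(γ*(1+4*ζ)-5*β0*ζ)) < 25*(φ0 - 1/5)^2 := by
      have e : (5*|φ0 - 1/5|)^2 = 25*(φ0 - 1/5)^2 := by rw [mul_pow, sq_abs]; ring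
      rw [e] at hsq
      exact hsq
    have hdetK5 : γ*(5*γ-4*β0-β0*ζ) - β0*(γ*(1+4*ζ)-5*β0*ζ)*(1-5*φ0)^2 < 0 := by
      have h1 := (div_lt_iff₀ hBC).mp ht2
      nlinarith [h1]
    have hdetK : (β0*(4+ζ)/5 - γ) * (β0*(1-5*φ0)^2*(1+4*ζ)/5 - γ)
        - 4*(1-5*φ0)^2*(ζ-1)^2*β0^2/25 < 0 := by nlinarith [hdetK5]
    obtain ⟨τ, hτv⟩ : ∃ t : ℝ, t = (β0*(4+ζ)/5 - γ) + (β0*(1-5*φ0)^2*(1+4*ζ)/5 - γ) := ⟨_, rfl⟩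
    obtain ⟨dk, hdkv⟩ : ∃ d : ℝ, d = (β0*(4+ζ)/5 - γ) * (β0*(1-5*φ0)^2*(1+4*ζ)/5 - γ)
        - 4*(1-5*φ0)^2*(ζ-1)^2*β0^2/25 := ⟨_, rfl⟩
    have hdkneg : dk < 0 := by rw [hdkv]; exact hdetK
    have hdisc : 0 ≤ τ^2 - 4*dk := by nlinarith [sq_nonneg τ]
    obtain ⟨s, hsv⟩ : ∃ r : ℝ, r = Real.sqrt (τ^2 - 4*dk) := ⟨_, rfl⟩
    have hs2 : s^2 = τ^2 - 4*dk := by rw [hsv]; exact Real.sq_sqrt hdisc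
    obtain ⟨μs, hμv⟩ : ∃ m : ℝ, m = (τ + s)/2 := ⟨_, rfl⟩
    have hτs : |τ| < s := by
      rw [hsv, ← Real.sqrt_sq_eq_abs]
      exact Real.sqrt_lt_sqrt (sq_nonneg τ) (by linarith)
    have hμpos : 0 < μs := by
      have h1 := neg_abs_le τ
      rw [hμv]; linarith [hτs, h1]
    have hq : μs^2 - τ*μs + dk = 0 := by
      rw [hμv]; linear_combination hs2/4
    have hq' : μs^2 - ((β0*(4+ζ)/5 - γ) + (β0*(1-5*φ0)^2*(1+4*ζ)/5 - γ))*μs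
        + ((β0*(4+ζ)/5 - γ) * (β0*(1-5*φ0)^2*(1+4*ζ)/5 - γ)
          - 4*(1-5*φ0)^2*(ζ-1)^2*β0^2/25) = 0 := by
      rw [← hτv, ← hdkv]; exact hq
    have hJx := csEigen β0 ζ γ φ0 μs hq'
    have hBneg : (β0*(4+ζ)/5 - γ) - μs < 0 := by
      have : β0*(4+ζ)/5 - γ < 0 := by linarith
      linarith
    have hx0 : (![4*(1-5*φ0)*(ζ-1)*β0/5 + ((β0*(4+ζ)/5 - γ) - μs),
        4*(1-5*φ0)*(ζ-1)*β0/5 + ((β0*(4+ζ)/5 - γ) - μs),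
        4*(1-5*φ0)*(ζ-1)*β0/5 + ((β0*(4+ζ)/5 - γ) - μs),
        4*(1-5*φ0)*(ζ-1)*β0/5 + ((β0*(4+ζ)/5 - γ) - μs),
        4*(1-5*φ0)*(ζ-1)*β0/5 - 4*((β0*(4+ζ)/5 - γ) - μs)] : Fin 5 → ℝ) ≠ 0 := by
      intro hcontra
      have h0 := congrFun hcontra 0
      have h4 := congrFun hcontra 4
      simp at h0 h4
      have : (β0*(4+ζ)/5 - γ) - μs = 0 := by linarith
      exact absurd this (ne_of_lt hBneg)
    refine ⟨μs, ?_, hμpos⟩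
    rw [spectrum.mem_iff]
    intro hu
    have hmv : (((algebraMap ℝ (Matrix (Fin 5) (Fin 5) ℝ)) μs - csJac5 β0 ζ γ φ0).mulVec
        ![4*(1-5*φ0)*(ζ-1)*β0/5 + ((β0*(4+ζ)/5 - γ) - μs),
          4*(1-5*φ0)*(ζ-1)*β0/5 + ((β0*(4+ζ)/5 - γ) - μs),
          4*(1-5*φ0)*(ζ-1)*β0/5 + ((β0*(4+ζ)/5 - γ) - μs),
          4*(1-5*φ0)*(ζ-1)*β0/5 + ((β0*(4+ζ)/5 - γ) - μs),
          4*(1-5*φ0)*(ζ-1)*β0/5 - 4*((β0*(4+ζ)/5 - γ) - μs)]) = 0 := by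
      rw [Algebra.algebraMap_eq_smul_one, Matrix.sub_mulVec, Matrix.smul_mulVec,
        Matrix.one_mulVec, hJx, sub_self]
    have hdet0 := Matrix.exists_mulVec_eq_zero_iff.mp ⟨_, hx0, hmv⟩
    have := (Matrix.isUnit_iff_isUnit_det _).mp hu
    rw [hdet0] at this
    exact (isUnit_iff_ne_zero.mp this) rfl
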